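/- Let G be a group with unit e and Λ : G × G → ℂ a normalised 2-cocycle with values in the unit circle: |Λ(g,h)| = 1, Λ(e,g) = Λ(g,e) = 1, and Λ(g, h·k)·Λ(h, k) = Λ(g·h, k)·Λ(g, h) for all g, h, k ∈ G. Let A = ⊕_{g∈G} A_g be a G-graded unital *-algebra over ℂ, and define on homogeneous elements a ∈ A_g, b ∈ A_h the deformed product a ∗ b := Λ(g,h)·(a·b) ∈ A_{gh} and the deformed involution a† := conj(Λ(g⁻¹, g))·a* ∈ A_{g⁻¹}. Then the bilinear extension of ∗ and the conjugate-linear extension of † make A into a G-graded unital *-algebra A^Λ with the same grading and the same unit: ∗ is associative, 1 ∗ a = a ∗ 1 = a, (a†)† = a, and (a ∗ b)† = b† ∗ a†. Moreover a ∗ b = a·b whenever a ∈ A_e or b ∈ A_e, and a† ∗ b = a*·b for all a, b ∈ A_g and all g ∈ G. In particular, Λ(g, g⁻¹) = Λ(g⁻¹, g) and Λ(g,g⁻¹)·Λ(h,h⁻¹) = Λ(g,h)·Λ(gh, h⁻¹g⁻¹)·Λ(h⁻¹, g⁻¹) for all g, h ∈ G. -/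

import Mathlib

/-!
On homogeneous elements the deformed operations differ from the original ones only by scalar
factors, so each axiom of `A^Λ` is the corresponding axiom of `A` together with an identity
between values of `Λ`. Associativity is exactly the cocycle identity. Since `|Λ| = 1` we have
`conj Λ = Λ⁻¹`, and the identities for `†` follow from the cocycle identity at `(g, g⁻¹, g)`,
which gives `Λ(g, g⁻¹) = Λ(g⁻¹, g)`, and at `(g, h, h⁻¹g⁻¹)` and `(h, h⁻¹, g⁻¹)`.
-/

/-- A `G`-graded unital `⋆`-algebra over `ℂ`: a direct sum decomposition
`A = ⊕_{g ∈ G} A_g` into subspaces with `A_g · A_h ⊆ A_{gh}`, `(A_g)* = A_{g⁻¹}` and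
`1 ∈ A_e`. -/
structure GradedStarAlgebra (G : Type*) [Group G]
    (A : Type*) [Ring A] [Algebra ℂ A] [StarRing A] [StarModule ℂ A] where
  fiber : G → Submodule ℂ A
  mul_mem' : ∀ {g h : G} {a b : A}, a ∈ fiber g → b ∈ fiber h → a * b ∈ fiber (g * h)
  star_mem' : ∀ {g : G} {a : A}, a ∈ fiber g → star a ∈ fiber g⁻¹
  one_mem' : (1 : A) ∈ fiber 1
  decompose' : ∀ a : A, ∃ (F : Finset G) (c : G → A),
    (∀ g : G, c g ∈ fiber g) ∧ a = ∑ g ∈ F, c g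
  independent' : ∀ (F : Finset G) (c : G → A), (∀ g : G, c g ∈ fiber g) →
    ∑ g ∈ F, c g = 0 → ∀ g ∈ F, c g = 0

variable {G : Type*} [Group G]
variable {A : Type*} [Ring A] [Algebra ℂ A] [StarRing A] [StarModule ℂ A]

/-- The deformed product on homogeneous elements: for `a ∈ A_g` and `b ∈ A_h`,
`a ∗ b := Λ(g, h) • (a · b)`. -/
def dMul (Λ : G → G → ℂ) (g h : G) (a b : A) : A := Λ g h • (a * b)

/-- The deformed involution on homogeneous elements: for `a ∈ A_g`,
`a† := conj (Λ(g⁻¹, g)) • a*`. -/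
def dStar (Λ : G → G → ℂ) (g : G) (a : A) : A := (starRingEnd ℂ) (Λ g⁻¹ g) • star a

def IsTwoCocycle {M : Type*} [Mul M] (Λ : G → G → M) : Prop :=
  ∀ g h k : G, Λ g (h * k) * Λ h k = Λ (g * h) k * Λ g h

namespace IsTwoCocycle

theorem apply_inv_comm {M : Type*} [MulOneClass M] {Λ : G → G → M} (hΛ : IsTwoCocycle Λ)
    (one_left : ∀ g, Λ 1 g = 1) (one_right : ∀ g, Λ g 1 = 1) (g : G) :
    Λ g g⁻¹ = Λ g⁻¹ g := by
  simpa [one_left, one_right] using (hΛ g g⁻¹ g).symm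

theorem apply_inv_mul_apply_inv {M : Type*} [CommMonoid M] {Λ : G → G → M}
    (hΛ : IsTwoCocycle Λ) (one_left : ∀ g, Λ 1 g = 1) (g h : G) :
    Λ g g⁻¹ * Λ h h⁻¹ = Λ g h * Λ (g * h) (h⁻¹ * g⁻¹) * Λ h⁻¹ g⁻¹ := by
  have h₁ := hΛ g h (h⁻¹ * g⁻¹)
  have h₂ := hΛ h h⁻¹ g⁻¹
  rw [mul_inv_cancel_left] at h₁
  rw [mul_inv_cancel, one_left, one_mul] at h₂
  calc Λ g g⁻¹ * Λ h h⁻¹ = Λ g g⁻¹ * Λ h (h⁻¹ * g⁻¹) * Λ h⁻¹ g⁻¹ := by rw [← h₂, mul_assoc]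
    _ = Λ g h * Λ (g * h) (h⁻¹ * g⁻¹) * Λ h⁻¹ g⁻¹ := by rw [h₁, mul_comm (Λ g h)]

theorem conj_apply_inv_mul {Λ : G → G → ℂ} (hΛ : IsTwoCocycle Λ)
    (norm_eq_one : ∀ g h, ‖Λ g h‖ = 1) (one_left : ∀ g, Λ 1 g = 1)
    (one_right : ∀ g, Λ g 1 = 1) (g h : G) :
    starRingEnd ℂ (Λ (g * h)⁻¹ (g * h)) * starRingEnd ℂ (Λ g h) =
      Λ h⁻¹ g⁻¹ * (starRingEnd ℂ (Λ g⁻¹ g) * starRingEnd ℂ (Λ h⁻¹ h)) := by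
  have key := hΛ.apply_inv_mul_apply_inv one_left g h
  rw [hΛ.apply_inv_comm one_left one_right g, hΛ.apply_inv_comm one_left one_right h,
    ← mul_inv_rev g h, hΛ.apply_inv_comm one_left one_right (g * h)] at key
  have ne_zero : ∀ g h, Λ g h ≠ 0 := fun g h ↦ norm_ne_zero_iff.mp (by simp [norm_eq_one])
  simp only [← Complex.inv_eq_conj (norm_eq_one _ _)]
  field_simp [ne_zero]
  linear_combination key

end IsTwoCocycle

theorem dMul_mem (S : GradedStarAlgebra G A) (Λ : G → G → ℂ) {g h : G} {a b : A}
    (ha : a ∈ S.fiber g) (hb : b ∈ S.fiber h) : dMul Λ g h a b ∈ S.fiber (g * h) :=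
  Submodule.smul_mem _ _ (S.mul_mem' ha hb)

theorem dStar_mem (S : GradedStarAlgebra G A) (Λ : G → G → ℂ) {g : G} {a : A}
    (ha : a ∈ S.fiber g) : dStar Λ g a ∈ S.fiber g⁻¹ :=
  Submodule.smul_mem _ _ (S.star_mem' ha)

omit [Group G] [StarRing A] [StarModule ℂ A] in
theorem dMul_eq_mul {Λ : G → G → ℂ} {g h : G} (hΛ : Λ g h = 1) (a b : A) :
    dMul Λ g h a b = a * b := by
  rw [dMul, hΛ, one_smul]

omit [StarRing A] [StarModule ℂ A] in
theorem dMul_assoc {Λ : G → G → ℂ} (hΛ : IsTwoCocycle Λ) (g h k : G) (a b c : A) :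
    dMul Λ (g * h) k (dMul Λ g h a b) c = dMul Λ g (h * k) a (dMul Λ h k b c) := by
  simp only [dMul, smul_mul_assoc, mul_smul_comm, smul_smul, mul_assoc]
  rw [hΛ g h k, mul_comm]

omit [StarModule ℂ A] in
theorem dMul_dStar {Λ : G → G → ℂ} {g : G} (hΛ : ‖Λ g⁻¹ g‖ = 1) (a b : A) :
    dMul Λ g⁻¹ g (dStar Λ g a) b = star a * b := by
  rw [dMul, dStar, smul_mul_assoc, smul_smul, mul_comm, Complex.conj_mul', hΛ]
  simp

theorem dStar_dStar {Λ : G → G → ℂ} {g : G} (hcomm : Λ g g⁻¹ = Λ g⁻¹ g)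
    (hΛ : ‖Λ g⁻¹ g‖ = 1) (a : A) : dStar Λ g⁻¹ (dStar Λ g a) = a := by
  rw [dStar, dStar, star_smul, star_star, inv_inv, hcomm, smul_smul, RCLike.star_def,
    Complex.conj_conj, Complex.conj_mul', hΛ]
  simp

theorem dStar_dMul {Λ : G → G → ℂ} (hΛ : IsTwoCocycle Λ) (norm_eq_one : ∀ g h, ‖Λ g h‖ = 1)
    (one_left : ∀ g, Λ 1 g = 1) (one_right : ∀ g, Λ g 1 = 1) (g h : G) (a b : A) :
    dStar Λ (g * h) (dMul Λ g h a b) = dMul Λ h⁻¹ g⁻¹ (dStar Λ h b) (dStar Λ g a) := by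
  simp only [dStar, dMul, star_smul, star_mul, smul_smul, smul_mul_assoc, mul_smul_comm,
    RCLike.star_def]
  rw [hΛ.conj_apply_inv_mul norm_eq_one one_left one_right]

theorem rieffel_deformation (S : GradedStarAlgebra G A) (Λ : G → G → ℂ)
    (hΛ_norm : ∀ g h : G, ‖Λ g h‖ = 1)
    (hΛ_one : ∀ g : G, Λ 1 g = 1 ∧ Λ g 1 = 1)
    (hΛ_cocycle : ∀ g h k : G, Λ g (h * k) * Λ h k = Λ (g * h) k * Λ g h) :
    -- the deformation preserves the grading
    (∀ (g h : G) (a b : A), a ∈ S.fiber g → b ∈ S.fiber h →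
      dMul Λ g h a b ∈ S.fiber (g * h)) ∧
    (∀ (g : G) (a : A), a ∈ S.fiber g → dStar Λ g a ∈ S.fiber g⁻¹) ∧
    -- `∗` is associative on homogeneous elements
    (∀ (g h k : G) (a b c : A), a ∈ S.fiber g → b ∈ S.fiber h → c ∈ S.fiber k →
      dMul Λ (g * h) k (dMul Λ g h a b) c = dMul Λ g (h * k) a (dMul Λ h k b c)) ∧
    -- `1` is a unit for `∗`
    (∀ (g : G) (a : A), a ∈ S.fiber g → dMul Λ 1 g 1 a = a ∧ dMul Λ g 1 a 1 = a) ∧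
    -- `†` is an involution
    (∀ (g : G) (a : A), a ∈ S.fiber g → dStar Λ g⁻¹ (dStar Λ g a) = a) ∧
    -- `†` is antimultiplicative:  `(a ∗ b)† = b† ∗ a†`
    (∀ (g h : G) (a b : A), a ∈ S.fiber g → b ∈ S.fiber h →
      dStar Λ (g * h) (dMul Λ g h a b) = dMul Λ h⁻¹ g⁻¹ (dStar Λ h b) (dStar Λ g a)) ∧
    -- the deformed product agrees with the original one if one factor lies in `A_e`
    (∀ (h : G) (a b : A), a ∈ S.fiber 1 → b ∈ S.fiber h → dMul Λ 1 h a b = a * b) ∧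
    (∀ (g : G) (a b : A), a ∈ S.fiber g → b ∈ S.fiber 1 → dMul Λ g 1 a b = a * b) ∧
    -- `a† ∗ b = a* · b` for `a, b ∈ A_g`
    (∀ (g : G) (a b : A), a ∈ S.fiber g → b ∈ S.fiber g →
      dMul Λ g⁻¹ g (dStar Λ g a) b = star a * b) ∧
    -- scalar identities for the cocycle
    (∀ g : G, Λ g g⁻¹ = Λ g⁻¹ g) ∧
    (∀ g h : G, Λ g g⁻¹ * Λ h h⁻¹ = Λ g h * Λ (g * h) (h⁻¹ * g⁻¹) * Λ h⁻¹ g⁻¹) := by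
  have one_left g := (hΛ_one g).1
  have one_right g := (hΛ_one g).2
  have hΛ : IsTwoCocycle Λ := hΛ_cocycle
  have apply_inv_comm := hΛ.apply_inv_comm one_left one_right
  exact ⟨fun g h a b ha hb ↦ dMul_mem S Λ ha hb,
    fun g a ha ↦ dStar_mem S Λ ha,
    fun g h k a b c _ _ _ ↦ dMul_assoc hΛ g h k a b c,
    fun g a _ ↦ ⟨by rw [dMul_eq_mul (one_left g), one_mul],
      by rw [dMul_eq_mul (one_right g), mul_one]⟩,
    fun g a _ ↦ dStar_dStar (apply_inv_comm g) (hΛ_norm _ _) a,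
    fun g h a b _ _ ↦ dStar_dMul hΛ hΛ_norm one_left one_right g h a b,
    fun h a b _ _ ↦ dMul_eq_mul (one_left h) a b,
    fun g a b _ _ ↦ dMul_eq_mul (one_right g) a b,
    fun g a b _ _ ↦ dMul_dStar (hΛ_norm _ _) a b,
    apply_inv_comm,
    hΛ.apply_inv_mul_apply_inv one_left⟩
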